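/- Let {X_i}_{i≥1} be independent, identically distributed nonnegative random variables such that for some constants c₁₃, c₁₀ > 0 and δ ∈ (0,1), P(X_i > n) ≤ c₁₃ · exp(−c₁₀ n^{δ/4}) for all n > 0. Let Q be a geometric random variable with success probability q ∈ (0,1) (i.e. P(Q = k) = q(1−q)^{k−1} for k ≥ 1), independent of {X_i}_{i≥1}. Then there exist constants c₁₁, c₁₂ > 0 such that for all n > 0, P(∑_{i=1}^{Q} X_i > n) ≤ c₁₁ · exp(−c₁₂ n^{δ/8}). -/

import Mathlib

/-!
Common framework for the boundary / right edge modified contact process on `ℤ`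
(after "The boundary modified contact process at criticality").

A configuration is an element of `{0,1}^ℤ`.  A continuous-time interacting particle
system with given flip rates is characterised through the martingale problem for its
formal generator (`IsSpinSystem`).  The critical rate `λ_c` of the standard contact
process, the invariant measure `μ̃` of the process seen from its right edge, hitting
times, and the Duminil-Copin–Tassion–Teixeira box-crossing exponent `δ` are
formalised below.
-/

namespace BMCP

/-- Abstract record of the space–time box-crossing events of (the graphical
representation of) the critical one-dimensional contact process: `VCross a₁ a₂ T`
(resp. `HCross a₁ a₂ T`) is the event that the box `[a₁, a₂] × [0, T]` is crossed
vertically (resp. horizontally) by an open path of the critical contact process,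
together with the basic structural properties of these events. -/
structure CPCrossings where
  Ω : Type
  [mΩ : MeasurableSpace Ω]
  P : MeasureTheory.Measure Ω
  isProb : MeasureTheory.IsProbabilityMeasure P
  VCross : ℝ → ℝ → ℝ → Set Ω
  HCross : ℝ → ℝ → ℝ → Set Ω
  meas_v : ∀ a₁ a₂ T, MeasurableSet (VCross a₁ a₂ T)
  meas_h : ∀ a₁ a₂ T, MeasurableSet (HCross a₁ a₂ T)
  /-- a vertical crossing of a box is a vertical crossing of any spatially larger box -/
  mono_v : ∀ a₁ a₂ b₁ b₂ T, b₁ ≤ a₁ → a₂ ≤ b₂ → VCross a₁ a₂ T ⊆ VCross b₁ b₂ T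
  /-- spatial translation invariance -/
  transl_v : ∀ x a₁ a₂ T, P (VCross (a₁ + x) (a₂ + x) T) = P (VCross a₁ a₂ T)
  /-- crossings of spatially disjoint boxes are independent -/
  indep_v : ∀ a₁ a₂ b₁ b₂ T, a₂ ≤ b₁ →
    ProbabilityTheory.IndepSet (VCross a₁ a₂ T) (VCross b₁ b₂ T) P

open MeasureTheory ProbabilityTheory Filter Set
open scoped ENNReal

/-- A configuration of the contact process on `ℤ`: `true` = infected. -/
abbrev Config := ℤ → Bool

/-- The set of infected sites of a configuration. -/
def infected (η : Config) : Set ℤ := {x : ℤ | η x = true}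

/-- Flip the state of site `x`. -/
def flipSite (x : ℤ) (η : Config) : Config := fun y => if y = x then !(η y) else η y

/-- The position `𝓡(η)` of the rightmost infected site, as a real number
(junk value if the infected set is empty or unbounded above). -/
noncomputable def R (η : Config) : ℝ := sSup ((fun x : ℤ => (x : ℝ)) '' infected η)

/-- The position `𝓛(η)` of the leftmost infected site. -/
noncomputable def Ledge (η : Config) : ℝ := sInf ((fun x : ℤ => (x : ℝ)) '' infected η)

/-- The all-susceptible configuration `∅`. -/
def emptyConfig : Config := fun _ => false

/-- The configuration with a single infection at the origin. -/
def singleOrigin : Config := fun x => decide (x = 0)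

/-- The configuration `(-∞, 0] ∩ ℤ`. -/
def halfLine : Config := fun x => decide (x ≤ 0)

/-- `Σ⊖`: configurations with finitely many infected sites to the right of the
origin and infinitely many to the left. -/
def SigmaMinus : Set Config :=
  {η | (infected η ∩ {x : ℤ | 0 < x}).Finite ∧ (infected η ∩ {x : ℤ | x < 0}).Infinite}

/-- Flip rates of the standard contact process with infection rate `lam`:
infected sites recover at rate 1, susceptible sites become infected at rate
`lam × (number of infected neighbours)`. -/
noncomputable def rateStd (lam : ℝ) (η : Config) (x : ℤ) : ℝ :=
  if η x then 1
  else (if η (x - 1) then lam else 0) + (if η (x + 1) then lam else 0)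

open Classical in
/-- Flip rates of the right edge modified contact process: as the standard contact
process with rate `lam_i`, except that the rightmost infected site infects its right
neighbour at rate `lam_e`. -/
noncomputable def rateRight (lam_i lam_e : ℝ) (η : Config) (x : ℤ) : ℝ :=
  if η x then 1
  else
    (if η (x - 1) then
        if BddAbove (infected η) ∧ (x : ℝ) - 1 = R η then lam_e else lam_i
      else 0) +
    (if η (x + 1) then lam_i else 0)

open Classical in
/-- Flip rates of the boundary modified contact process: additionally the leftmost
infected site infects its left neighbour at rate `lam_e`. -/
noncomputable def rateBoundary (lam_i lam_e : ℝ) (η : Config) (x : ℤ) : ℝ :=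
  if η x then 1
  else
    (if η (x - 1) then
        if BddAbove (infected η) ∧ (x : ℝ) - 1 = R η then lam_e else lam_i
      else 0) +
    (if η (x + 1) then
        if BddBelow (infected η) ∧ (x : ℝ) + 1 = Ledge η then lam_e else lam_i
      else 0)

/-- A function of the configuration depending on finitely many sites. -/
def IsLocal (f : Config → ℝ) : Prop :=
  ∃ s : Finset ℤ, ∀ η η' : Config, (∀ x ∈ s, η x = η' x) → f η = f η'

/-- The formal generator of the spin system with flip rates `c`. -/
noncomputable def gen (c : Config → ℤ → ℝ) (f : Config → ℝ) (η : Config) : ℝ :=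
  ∑' x : ℤ, c η x * (f (flipSite x η) - f η)

/-- The Dynkin martingale `f(η_t) - ∫_0^t (Lf)(η_u) du` of a function `f`. -/
noncomputable def dynkinMart (c : Config → ℤ → ℝ) (f : Config → ℝ)
    {Ω : Type} (η : ℝ → Ω → Config) (t : ℝ) (ω : Ω) : ℝ :=
  f (η t ω) - ∫ u in (0:ℝ)..t, gen c f (η u ω)

/-- `η` is a realisation (under `P`) of the interacting particle system on `{0,1}^ℤ`
with flip rates `c`, characterised through the martingale problem: for every bounded
measurable local function `f`, the Dynkin process `f(η_t) - ∫_0^t (Lf)(η_u) du` is a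
martingale for the natural filtration of `η` (expressed via bounded measurable
functionals of the past). -/
structure IsSpinSystem (c : Config → ℤ → ℝ) {Ω : Type} [MeasurableSpace Ω]
    (P : Measure Ω) (η : ℝ → Ω → Config) : Prop where
  measurable : ∀ t : ℝ, Measurable (η t)
  martingale :
    ∀ f : Config → ℝ, IsLocal f → Measurable f → (∃ C : ℝ, ∀ ξ, |f ξ| ≤ C) →
      ∀ s t : ℝ, 0 ≤ s → s ≤ t →
        ∀ (k : ℕ) (τs : Fin k → ℝ) (g : (Fin k → Config) → ℝ),
          (∀ i, 0 ≤ τs i ∧ τs i ≤ s) → Measurable g → (∃ C : ℝ, ∀ v, |g v| ≤ C) →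
          ∫ ω, (dynkinMart c f η t ω - dynkinMart c f η s ω) *
              g (fun i => η (τs i) ω) ∂P = 0

/-- The standard contact process with infection rate `lam`, started from a single
infection at the origin, dies out (equivalently, since `∅` is absorbing,
`P(η_t ≠ ∅) → 0` as `t → ∞`). -/
def DiesOutFromOrigin (lam : ℝ) : Prop :=
  ∀ (Ω : Type) [MeasurableSpace Ω] (P : Measure Ω) (η : ℝ → Ω → Config),
    IsProbabilityMeasure P → IsSpinSystem (rateStd lam) P η →
    (∀ᵐ ω ∂P, η 0 ω = singleOrigin) →
    Tendsto (fun t : ℝ => P {ω | η t ω ≠ emptyConfig}) atTop (nhds 0)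

/-- The critical infection rate `λ_c` of the standard one-dimensional contact
process. -/
noncomputable def lambda_c : ℝ := sSup {lam : ℝ | 0 ≤ lam ∧ DiesOutFromOrigin lam}

/-- The shift `Ψ` placing the rightmost infected site at the origin. -/
noncomputable def shiftToEdge (η : Config) : Config := fun x => η (x + ⌊R η⌋)

/-- `μ` is the invariant measure `μ̃` of the right edge modified contact process as
seen from its right edge: a probability measure supported on `Σ⊖ ∩ {R = 0}` such that
for any realisation of the process started from `μ`, the configuration seen from the
right edge at any later time again has law `μ`. -/
def IsEdgeInvariant (lam_i lam_e : ℝ) (μ : Measure Config) : Prop :=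
  IsProbabilityMeasure μ ∧
  (∀ᵐ ηc ∂μ, ηc ∈ SigmaMinus ∧ R ηc = 0) ∧
  ∀ (Ω : Type) [MeasurableSpace Ω] (P : Measure Ω) (η : ℝ → Ω → Config),
    IsProbabilityMeasure P → IsSpinSystem (rateRight lam_i lam_e) P η →
    Measure.map (η 0) P = μ →
    ∀ t : ℝ, 0 ≤ t → Measure.map (fun ω => shiftToEdge (η t ω)) P = μ

/-- The first hitting time `τ^∅` of the all-susceptible configuration (`∞` if the
process never reaches `∅`). -/
noncomputable def extinctionTime {Ω : Type} (η : ℝ → Ω → Config) (ω : Ω) : ℝ≥0∞ :=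
  sInf {t : ℝ≥0∞ | ∃ s : ℝ, 0 ≤ s ∧ ENNReal.ofReal s = t ∧ η s ω = emptyConfig}

/-- The first hitting time of the right edge `R(η_t)` to the value `k`. -/
noncomputable def hitTimeR {Ω : Type} (η : ℝ → Ω → Config) (k : ℝ) (ω : Ω) : ℝ≥0∞ :=
  sInf {t : ℝ≥0∞ | ∃ s : ℝ, 0 ≤ s ∧ ENNReal.ofReal s = t ∧ R (η s ω) = k}

/-- `sup_{0 ≤ s ≤ t} R(η_s)`. -/
noncomputable def supR {Ω : Type} (η : ℝ → Ω → Config) (t : ℝ) (ω : Ω) : ℝ :=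
  sSup ((fun s => R (η s ω)) '' Icc (0:ℝ) t)

/-- `sup_{0 ≤ s ≤ t} |R(η_s)|`. -/
noncomputable def supAbsR {Ω : Type} (η : ℝ → Ω → Config) (t : ℝ) (ω : Ω) : ℝ :=
  sSup ((fun s => |R (η s ω)|) '' Icc (0:ℝ) t)

/-- `δ` is the universal exponent of the Duminil-Copin–Tassion–Teixeira box-crossing
property of the critical contact process: `δ ∈ (0,1)` and there are `c, p > 0` and a
scaling `w(n) → ∞` with `w(n) ≤ c n^{1-δ}` such that every `w(n) × n` space-time box
is crossed horizontally and vertically with probability at least `p`, uniformly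
in `n`. -/
def IsBoxCrossingExponent (G : CPCrossings) (δ : ℝ) : Prop :=
  0 < δ ∧ δ < 1 ∧
    ∃ c > (0:ℝ), ∃ p > (0:ℝ), ∃ w : ℕ → ℝ,
      Tendsto w atTop atTop ∧
        ∀ n : ℕ, 1 ≤ n →
          w n ≤ c * (n : ℝ) ^ (1 - δ) ∧
          ENNReal.ofReal p ≤ G.P (G.VCross 0 (w n) (n : ℝ)) ∧
          ENNReal.ofReal p ≤ G.P (G.HCross 0 (w n) (n : ℝ))

/-- The finite-dimensional distribution at (ordered) times `ts 0 ≤ ts 1 ≤ ⋯` of a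
Brownian motion with diffusion coefficient `v` started at `0`, realised as the law of
the partial sums of independent centred Gaussian increments. -/
noncomputable def bmFDD (v : ℝ) (k : ℕ) (ts : Fin k → ℝ) : Measure (Fin k → ℝ) :=
  Measure.map (fun z : Fin k → ℝ => fun i => ∑ j ∈ Finset.univ.filter (· ≤ i), z j)
    (Measure.pi fun j : Fin k =>
      gaussianReal 0 (Real.toNNReal (v * (ts j -
        if (j : ℕ) = 0 then 0
        else ts ⟨(j : ℕ) - 1, lt_of_le_of_lt (Nat.sub_le _ _) j.isLt⟩))))

/-- The successive restart times `T_i` of the renewal scheme of Section 4.3: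
`T_0 = 0` and `T_{i+1} = T_i + τ^{∅,i+1}`, where `τ^{∅,i+1}` is the extinction time
of the auxiliary process `η^{T_i}` started at time `T_i` from a single infection at
the current right edge. -/
noncomputable def renewalSeq {Ω : Type} (aux : ℝ → ℝ → Ω → Config) (ω : Ω) :
    ℕ → ℝ≥0∞
  | 0 => 0
  | (i + 1) =>
      renewalSeq aux ω i + extinctionTime (aux (renewalSeq aux ω i).toReal) ω

/-- The renewal time `T = T_I`: the first of the times `T_i` whose auxiliary process
survives forever (equivalently, the largest finite value of the sequence `T_i`). -/
noncomputable def renewalTime {Ω : Type} (aux : ℝ → ℝ → Ω → Config) (ω : Ω) : ℝ≥0∞ :=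
  sSup {t : ℝ≥0∞ | (∃ i : ℕ, renewalSeq aux ω i = t) ∧ t ≠ ⊤}

private lemma geom_sum_one_sub (q : ℝ) (m : ℕ) :
    ∑ k ∈ Finset.Icc 1 m, q * (1 - q) ^ (k - 1) = 1 - (1 - q) ^ m := by
  induction m with
  | zero => simp
  | succ m ih =>
    rw [Finset.sum_Icc_succ_top (Nat.le_add_left 1 m), ih]
    simp only [Nat.add_sub_cancel, pow_succ]
    ring

set_option maxHeartbeats 4000000 in
/-- **Stretched exponential tail for a geometric sum of stretched exponential
variables** (Lemma 5.5).  Let `X₁, X₂, …` be i.i.d. nonnegative random variables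
with `P(Xᵢ > n) ≤ c₁₃ exp(-c₁₀ n^{δ/4})`, and let `Q` be an independent geometric
random variable with success probability `q ∈ (0,1)`.  Then there are constants
`c₁₁, c₁₂ > 0` with `P(∑_{i=1}^{Q} Xᵢ > n) ≤ c₁₁ exp(-c₁₂ n^{δ/8})` for all
`n > 0`. -/
theorem geometric_sum_tail
    {Ω : Type} [MeasurableSpace Ω] (P : Measure Ω) (hP : IsProbabilityMeasure P)
    (X : ℕ → Ω → ℝ) (Q : Ω → ℕ) (q c₁₃ c₁₀ δ : ℝ)
    (hq0 : 0 < q) (hq1 : q < 1) (hc₁₃ : 0 < c₁₃) (hc₁₀ : 0 < c₁₀)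
    (hδ0 : 0 < δ) (hδ1 : δ < 1)
    (hXmeas : ∀ i, Measurable (X i)) (hQmeas : Measurable Q)
    -- the `Xᵢ` are nonnegative
    (hXnonneg : ∀ i, ∀ᵐ ω ∂P, 0 ≤ X i ω)
    -- the `Xᵢ` are identically distributed
    (hident : ∀ i j, Measure.map (X i) P = Measure.map (X j) P)
    -- the `Xᵢ` are independent
    (hindep : iIndepFun X P)
    -- `Q` is geometric with success probability `q`
    (hQlaw : ∀ k : ℕ, 1 ≤ k → (P {ω | Q ω = k}).toReal = q * (1 - q) ^ (k - 1))
    -- `Q` is independent of the whole sequence `X`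
    (hQindep : Indep (MeasurableSpace.comap Q (inferInstance : MeasurableSpace ℕ))
      (⨆ i : ℕ, MeasurableSpace.comap (X i) (inferInstance : MeasurableSpace ℝ)) P)
    -- stretched exponential tails of the `Xᵢ`
    (htail : ∀ i, ∀ n : ℝ, 0 < n →
      (P {ω | n < X i ω}).toReal ≤ c₁₃ * Real.exp (-c₁₀ * n ^ (δ / 4))) :
    ∃ c₁₁ : ℝ, 0 < c₁₁ ∧ ∃ c₁₂ : ℝ, 0 < c₁₂ ∧
      ∀ n : ℝ, 0 < n →
        (P {ω | n < ∑ i ∈ Finset.Icc 1 (Q ω), X i ω}).toReal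
          ≤ c₁₁ * Real.exp (-c₁₂ * n ^ (δ / 8)) := by
  classical
  haveI := hP
  set r : ℝ := 1 - q with hrdef
  have hr0 : 0 < r := by simp only [hrdef]; linarith
  have hr1 : r < 1 := by simp only [hrdef]; linarith
  have hcg : 0 < -Real.log r := by
    have := Real.log_neg hr0 hr1; linarith
  set cg : ℝ := -Real.log r with hcgdef
  set k : ℕ := ⌈4 / δ⌉₊ with hkdef
  have hk1 : 1 ≤ k := Nat.one_le_ceil_iff.mpr (by positivity)
  have hkpos : (0:ℝ) < (k:ℝ) := by exact_mod_cast hk1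
  have hkδ : 4 / δ ≤ (k:ℝ) := Nat.le_ceil _
  set K : ℝ := (4 * (k:ℝ) / c₁₀) ^ k with hKdef
  have hK0 : 0 < K := by positivity
  set c₁₂ : ℝ := min cg (c₁₀ / 4) with hc12def
  have hc₁₂0 : 0 < c₁₂ := lt_min hcg (by linarith)
  refine ⟨2 * c₁₃ * K + 1 + Real.exp c₁₂, by positivity, c₁₂, hc₁₂0, ?_⟩
  intro n hn
  have hexp_pos : 0 < Real.exp (-c₁₂ * n ^ (δ / 8)) := Real.exp_pos _
  by_cases hn1 : n < 1
  · -- small `n`: the probability is at most `1 ≤ exp c₁₂ · exp (-c₁₂ n^{δ/8})`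
    have h1 : (P {ω | n < ∑ i ∈ Finset.Icc 1 (Q ω), X i ω}).toReal ≤ 1 := by
      have := ENNReal.toReal_mono (by simp) (prob_le_one
        (μ := P) (s := {ω | n < ∑ i ∈ Finset.Icc 1 (Q ω), X i ω}))
      simpa using this
    have hpow1 : n ^ (δ / 8) ≤ 1 :=
      Real.rpow_le_one hn.le hn1.le (by positivity)
    have h2 : Real.exp (-c₁₂) ≤ Real.exp (-c₁₂ * n ^ (δ / 8)) := by
      apply Real.exp_le_exp.mpr
      nlinarith
    have h3 : (1:ℝ) ≤ Real.exp c₁₂ * Real.exp (-c₁₂ * n ^ (δ / 8)) := by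
      calc (1:ℝ) = Real.exp c₁₂ * Real.exp (-c₁₂) := by
            rw [← Real.exp_add]; simp
        _ ≤ Real.exp c₁₂ * Real.exp (-c₁₂ * n ^ (δ / 8)) := by
            exact mul_le_mul_of_nonneg_left h2 (Real.exp_pos _).le
    nlinarith [mul_pos (mul_pos (mul_pos two_pos hc₁₃) hK0) hexp_pos, hexp_pos]
  · push_neg at hn1
    -- main case `n ≥ 1`
    set s : ℝ := Real.sqrt n with hsdef
    have hs1 : 1 ≤ s := by
      rw [hsdef, show (1:ℝ) = Real.sqrt 1 by simp]
      exact Real.sqrt_le_sqrt hn1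
    have hs0 : 0 < s := by linarith
    have hss : s * s = n := Real.mul_self_sqrt hn.le
    set m : ℕ := ⌈s⌉₊ with hmdef
    have hm_lb : s ≤ (m:ℝ) := Nat.le_ceil _
    have hm_ub : (m:ℝ) ≤ 2 * s := by
      have := Nat.ceil_lt_add_one hs0.le
      have hmr : (m:ℝ) < s + 1 := by exact_mod_cast this
      linarith
    have hm1 : 1 ≤ m := Nat.one_le_ceil_iff.mpr hs0
    have hm0 : (0:ℝ) < (m:ℝ) := by linarith
    have hnm0 : 0 < n / (m:ℝ) := by positivity
    set t : ℝ := n ^ (δ / 8) with htdef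
    have ht0 : 0 < t := Real.rpow_pos_of_pos hn _
    have hts : t ≤ s := by
      rw [htdef, hsdef, Real.sqrt_eq_rpow]
      exact Real.rpow_le_rpow_of_exponent_le hn1 (by linarith)
    -- the union bound event
    have hQset : MeasurableSet {ω | m < Q ω} := hQmeas measurableSet_Ioi
    have hXset : ∀ i, MeasurableSet {ω | n / (m:ℝ) < X i ω} := fun i =>
      hXmeas i measurableSet_Ioi
    have hsub : ∀ᵐ ω ∂P, ω ∈ ({ω | n < ∑ i ∈ Finset.Icc 1 (Q ω), X i ω} : Set Ω) →
        ω ∈ (({ω | m < Q ω} : Set Ω) ∪ ⋃ i ∈ Finset.Icc 1 m, {ω | n / (m:ℝ) < X i ω}) := by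
      have hae : ∀ᵐ ω ∂P, ∀ i, 0 ≤ X i ω := ae_all_iff.mpr hXnonneg
      filter_upwards [hae] with ω hω hsum
      by_contra hB
      rw [Set.mem_union, not_or] at hB
      obtain ⟨h1', h2'⟩ := hB
      have hQle : Q ω ≤ m := not_lt.mp h1'
      have hXle : ∀ i ∈ Finset.Icc 1 m, X i ω ≤ n / (m:ℝ) := by
        intro i hi
        by_contra hlt
        push_neg at hlt
        exact h2' (Set.mem_iUnion₂.mpr ⟨i, hi, hlt⟩)
      have h1 : ∑ i ∈ Finset.Icc 1 (Q ω), X i ω ≤ ∑ i ∈ Finset.Icc 1 m, X i ω :=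
        Finset.sum_le_sum_of_subset_of_nonneg
          (Finset.Icc_subset_Icc_right hQle) (fun i _ _ => hω i)
      have h2 : ∑ i ∈ Finset.Icc 1 m, X i ω ≤ ∑ _i ∈ Finset.Icc 1 m, n / (m:ℝ) :=
        Finset.sum_le_sum (fun i hi => hXle i hi)
      have h3 : ∑ _i ∈ Finset.Icc 1 m, n / (m:ℝ) = n := by
        rw [Finset.sum_const, Nat.card_Icc, Nat.add_sub_cancel, nsmul_eq_mul]
        field_simp
      have hs4 : n < ∑ i ∈ Finset.Icc 1 (Q ω), X i ω := hsum
      linarith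
    have hunion : P ({ω | m < Q ω} ∪ ⋃ i ∈ Finset.Icc 1 m, {ω | n / (m:ℝ) < X i ω})
        ≤ P {ω | m < Q ω} + ∑ i ∈ Finset.Icc 1 m, P {ω | n / (m:ℝ) < X i ω} :=
      le_trans (measure_union_le _ _)
        (add_le_add_right (measure_biUnion_finset_le _ _) _)
    have hA : (P {ω | n < ∑ i ∈ Finset.Icc 1 (Q ω), X i ω}).toReal ≤
        (P {ω | m < Q ω}).toReal +
          ∑ i ∈ Finset.Icc 1 m, (P {ω | n / (m:ℝ) < X i ω}).toReal := by
      have h := le_trans (measure_mono_ae hsub) hunion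
      have h2 := ENNReal.toReal_mono
        (by exact ENNReal.add_ne_top.mpr ⟨measure_ne_top P _,
          (ENNReal.sum_lt_top.mpr (fun i _ => measure_lt_top P _)).ne⟩) h
      rwa [ENNReal.toReal_add (measure_ne_top P _)
        (ENNReal.sum_lt_top.mpr (fun i _ => measure_lt_top P _)).ne,
        ENNReal.toReal_sum (fun i _ => measure_ne_top P _)] at h2
    -- geometric tail bound
    have hgeo : (P {ω | m < Q ω}).toReal ≤ r ^ m := by
      have hdisj : Disjoint {ω | m < Q ω} (⋃ j ∈ Finset.Icc 1 m, {ω | Q ω = j}) := by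
        rw [Set.disjoint_iUnion₂_right]
        intro j hj
        rw [Set.disjoint_left]
        intro ω h1 h2
        simp only [Set.mem_setOf_eq] at h1 h2
        rw [Finset.mem_Icc] at hj
        omega
      have hmeasU : MeasurableSet (⋃ j ∈ Finset.Icc 1 m, {ω | Q ω = j}) :=
        MeasurableSet.biUnion (Finset.Icc 1 m).countable_toSet
          (fun j _ => hQmeas (measurableSet_singleton j))
      have hPU : (P (⋃ j ∈ Finset.Icc 1 m, {ω | Q ω = j})).toReal = 1 - r ^ m := by
        have hpd : (↑(Finset.Icc 1 m) : Set ℕ).PairwiseDisjoint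
            (fun j => {ω | Q ω = j}) := by
          intro a _ b _ hab
          rw [Function.onFun, Set.disjoint_left]
          intro ω h1 h2
          simp only [Set.mem_setOf_eq] at h1 h2
          exact hab (h1 ▸ h2 ▸ rfl)
        rw [measure_biUnion_finset hpd
            (fun j _ => hQmeas (measurableSet_singleton j)),
          ENNReal.toReal_sum (fun j _ => measure_ne_top P _)]
        rw [show (1 - r ^ m : ℝ) = ∑ j ∈ Finset.Icc 1 m, q * (1 - q) ^ (j - 1) by
          rw [geom_sum_one_sub]]
        exact Finset.sum_congr rfl (fun j hj => hQlaw j (Finset.mem_Icc.mp hj).1)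
      have hle1 : P ({ω | m < Q ω} ∪ ⋃ j ∈ Finset.Icc 1 m, {ω | Q ω = j}) ≤ 1 :=
        prob_le_one
      rw [measure_union hdisj hmeasU] at hle1
      have h2 := ENNReal.toReal_mono (by simp) hle1
      rw [ENNReal.toReal_add (measure_ne_top P _) (measure_ne_top P _)] at h2
      simp only [ENNReal.toReal_one] at h2
      rw [hPU] at h2
      linarith
    -- tail bound for each summand
    have htailsum : ∑ i ∈ Finset.Icc 1 m, (P {ω | n / (m:ℝ) < X i ω}).toReal ≤
        (m:ℝ) * (c₁₃ * Real.exp (-c₁₀ * (n / (m:ℝ)) ^ (δ / 4))) := by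
      calc ∑ i ∈ Finset.Icc 1 m, (P {ω | n / (m:ℝ) < X i ω}).toReal
          ≤ ∑ _i ∈ Finset.Icc 1 m, c₁₃ * Real.exp (-c₁₀ * (n / (m:ℝ)) ^ (δ / 4)) :=
            Finset.sum_le_sum (fun i _ => htail i (n / (m:ℝ)) hnm0)
        _ = (m:ℝ) * (c₁₃ * Real.exp (-c₁₀ * (n / (m:ℝ)) ^ (δ / 4))) := by
            rw [Finset.sum_const, Nat.card_Icc, nsmul_eq_mul]
            norm_num
    -- numeric estimate 1 : `r ^ m ≤ exp (-c₁₂ t)`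
    have hnum1 : r ^ m ≤ Real.exp (-c₁₂ * t) := by
      have : r ^ m = Real.exp ((m:ℝ) * Real.log r) := by
        rw [Real.exp_nat_mul, Real.exp_log hr0]
      rw [this]
      apply Real.exp_le_exp.mpr
      have hlr : Real.log r = -cg := by rw [hcgdef]; ring
      rw [hlr]
      have h1 : cg * t ≤ cg * (m:ℝ) :=
        mul_le_mul_of_nonneg_left (le_trans hts hm_lb) hcg.le
      have h2 : c₁₂ ≤ cg := min_le_left _ _
      nlinarith
    -- numeric estimate 2 : `(t/2) ≤ (n/m)^{δ/4}`
    have hnum2 : t / 2 ≤ (n / (m:ℝ)) ^ (δ / 4) := by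
      have hs2 : s / 2 ≤ n / (m:ℝ) := by
        rw [div_le_div_iff₀ (by norm_num : (0:ℝ) < 2) hm0]
        nlinarith
      have h1 : (s / 2) ^ (δ / 4 : ℝ) ≤ (n / (m:ℝ)) ^ (δ / 4 : ℝ) :=
        Real.rpow_le_rpow (by positivity) hs2 (by positivity)
      have h2 : (s / 2 : ℝ) ^ (δ / 4 : ℝ) = s ^ (δ / 4 : ℝ) * (1/2 : ℝ) ^ (δ / 4 : ℝ) := by
        rw [show (s / 2 : ℝ) = s * (1/2 : ℝ) by ring,
          Real.mul_rpow hs0.le (by norm_num)]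
      have h3 : s ^ (δ / 4 : ℝ) = t := by
        rw [hsdef, Real.sqrt_eq_rpow, ← Real.rpow_mul hn.le, htdef,
          show (1 / 2 * (δ / 4) : ℝ) = δ / 8 by ring]
      have h4 : (1/2 : ℝ) ≤ (1/2 : ℝ) ^ (δ / 4 : ℝ) := by
        calc (1/2 : ℝ) = (1/2 : ℝ) ^ (1 : ℝ) := by norm_num
          _ ≤ (1/2 : ℝ) ^ (δ / 4 : ℝ) :=
            Real.rpow_le_rpow_of_exponent_ge (by norm_num) (by norm_num)
              (by linarith)
      calc t / 2 = t * (1/2 : ℝ) := by ring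
        _ ≤ t * ((1/2 : ℝ) ^ (δ / 4 : ℝ)) := by nlinarith
        _ = s ^ (δ / 4 : ℝ) * (1/2 : ℝ) ^ (δ / 4 : ℝ) := by rw [h3]
        _ = (s / 2 : ℝ) ^ (δ / 4 : ℝ) := h2.symm
        _ ≤ (n / (m:ℝ)) ^ (δ / 4 : ℝ) := h1
    -- numeric estimate 3 : `s ≤ K * exp ((c₁₀/4) t)`
    have hnum3 : s ≤ K * Real.exp (c₁₀ / 4 * t) := by
      set x : ℝ := c₁₀ / (4 * (k:ℝ)) * t with hxdef
      have hx0 : 0 ≤ x := by positivity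
      have hxe : x ≤ Real.exp x := le_trans (by linarith) (Real.add_one_le_exp x)
      have h1 : x ^ k ≤ Real.exp ((k:ℝ) * x) := by
        rw [Real.exp_nat_mul]
        exact pow_le_pow_left₀ hx0 hxe k
      have hkx : (k:ℝ) * x = c₁₀ / 4 * t := by
        rw [hxdef]; field_simp
      have h2 : x ^ k = (c₁₀ / (4 * (k:ℝ))) ^ k * t ^ k := by
        rw [hxdef, mul_pow]
      have h3 : s ≤ t ^ k := by
        have : t ^ k = n ^ (δ / 8 * (k:ℝ)) := by
          rw [htdef, ← Real.rpow_natCast (n ^ (δ / 8)) k, ← Real.rpow_mul hn.le]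
        rw [this, hsdef, Real.sqrt_eq_rpow]
        apply Real.rpow_le_rpow_of_exponent_le hn1
        rw [div_le_iff₀ hδ0] at hkδ
        nlinarith
      have h4 : (c₁₀ / (4 * (k:ℝ))) ^ k * s ≤ Real.exp (c₁₀ / 4 * t) := by
        calc (c₁₀ / (4 * (k:ℝ))) ^ k * s ≤ (c₁₀ / (4 * (k:ℝ))) ^ k * t ^ k := by
              apply mul_le_mul_of_nonneg_left h3 (by positivity)
          _ = x ^ k := h2.symm
          _ ≤ Real.exp ((k:ℝ) * x) := h1
          _ = Real.exp (c₁₀ / 4 * t) := by rw [hkx]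
      have hKinv : K * (c₁₀ / (4 * (k:ℝ))) ^ k = 1 := by
        rw [hKdef, ← mul_pow]
        rw [show 4 * (k:ℝ) / c₁₀ * (c₁₀ / (4 * (k:ℝ))) = 1 by
          field_simp]
        simp
      calc s = K * ((c₁₀ / (4 * (k:ℝ))) ^ k * s) := by
            rw [← mul_assoc, hKinv, one_mul]
        _ ≤ K * Real.exp (c₁₀ / 4 * t) := by
            apply mul_le_mul_of_nonneg_left h4 hK0.le
    -- combine everything
    have hfinal : (m:ℝ) * (c₁₃ * Real.exp (-c₁₀ * (n / (m:ℝ)) ^ (δ / 4))) ≤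
        2 * c₁₃ * K * Real.exp (-c₁₂ * t) := by
      have he1 : Real.exp (-c₁₀ * (n / (m:ℝ)) ^ (δ / 4)) ≤
          Real.exp (-(c₁₀ / 2) * t) := by
        apply Real.exp_le_exp.mpr
        nlinarith
      have h5 : (m:ℝ) * (c₁₃ * Real.exp (-c₁₀ * (n / (m:ℝ)) ^ (δ / 4))) ≤
          2 * s * (c₁₃ * Real.exp (-(c₁₀ / 2) * t)) := by
        have hp1 : 0 < Real.exp (-c₁₀ * (n / (m:ℝ)) ^ (δ / 4)) := Real.exp_pos _
        have h5' : (m:ℝ) * Real.exp (-c₁₀ * (n / (m:ℝ)) ^ (δ / 4)) ≤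
            2 * s * Real.exp (-(c₁₀ / 2) * t) :=
          mul_le_mul hm_ub he1 hp1.le (by positivity)
        nlinarith [mul_le_mul_of_nonneg_left h5' hc₁₃.le]
      have h6 : 2 * s * (c₁₃ * Real.exp (-(c₁₀ / 2) * t)) ≤
          2 * c₁₃ * K * (Real.exp (c₁₀ / 4 * t) * Real.exp (-(c₁₀ / 2) * t)) := by
        have := mul_le_mul_of_nonneg_left hnum3
          (by positivity : (0:ℝ) ≤ 2 * c₁₃ * Real.exp (-(c₁₀ / 2) * t))
        nlinarith [this]
      have h7 : Real.exp (c₁₀ / 4 * t) * Real.exp (-(c₁₀ / 2) * t) =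
          Real.exp (-(c₁₀ / 4) * t) := by
        rw [← Real.exp_add]; ring_nf
      have h8 : Real.exp (-(c₁₀ / 4) * t) ≤ Real.exp (-c₁₂ * t) := by
        apply Real.exp_le_exp.mpr
        have : c₁₂ ≤ c₁₀ / 4 := min_le_right _ _
        nlinarith
      calc (m:ℝ) * (c₁₃ * Real.exp (-c₁₀ * (n / (m:ℝ)) ^ (δ / 4))) ≤
            2 * s * (c₁₃ * Real.exp (-(c₁₀ / 2) * t)) := h5
        _ ≤ 2 * c₁₃ * K * (Real.exp (c₁₀ / 4 * t) * Real.exp (-(c₁₀ / 2) * t)) := h6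
        _ = 2 * c₁₃ * K * Real.exp (-(c₁₀ / 4) * t) := by rw [h7]
        _ ≤ 2 * c₁₃ * K * Real.exp (-c₁₂ * t) := by
            apply mul_le_mul_of_nonneg_left h8 (by positivity)
    have hexpc : 0 < Real.exp c₁₂ := Real.exp_pos _
    calc (P {ω | n < ∑ i ∈ Finset.Icc 1 (Q ω), X i ω}).toReal
        ≤ (P {ω | m < Q ω}).toReal +
          ∑ i ∈ Finset.Icc 1 m, (P {ω | n / (m:ℝ) < X i ω}).toReal := hA
      _ ≤ r ^ m + (m:ℝ) * (c₁₃ * Real.exp (-c₁₀ * (n / (m:ℝ)) ^ (δ / 4))) :=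
          add_le_add hgeo htailsum
      _ ≤ Real.exp (-c₁₂ * t) + 2 * c₁₃ * K * Real.exp (-c₁₂ * t) :=
          add_le_add hnum1 hfinal
      _ ≤ (2 * c₁₃ * K + 1 + Real.exp c₁₂) * Real.exp (-c₁₂ * t) := by
          linarith [mul_pos hexpc (Real.exp_pos (-c₁₂ * t))]
      _ = (2 * c₁₃ * K + 1 + Real.exp c₁₂) * Real.exp (-c₁₂ * n ^ (δ / 8)) := by
          rw [htdef]

end BMCP
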